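/- Let G be the group of order p^{2r+1}·2^n described in the context and let K be a subgroup of P with K normal in P and P/K cyclic. If there exists j with 1 ≤ j ≤ 2^{n−1} such that the subgroup generated by x, y₁^{k^j}z₁, …, y_r^{k^j}z_r is contained in K, then (P,K) is not a Shoda pair of G. -/

import Mathlib

open scoped Classical

namespace Paper

variable {G : Type*} [Group G] [Fintype G]

noncomputable instance : Fintype (Subgroup G) :=
  Fintype.ofInjective (fun H : Subgroup G => (H : Set G)) SetLike.coe_injective

/-- `M̂ = (1/|M|) ∑_{m ∈ M} m` in the rational group algebra `ℚ[G]`. -/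
noncomputable def hat (M : Subgroup G) : MonoidAlgebra ℚ G :=
  (Nat.card M : ℚ)⁻¹ • ∑ m : M, MonoidAlgebra.of ℚ G (m : G)

/-- `L` is a normal subgroup of `H` properly containing `K`. -/
def NormalOver (H K L : Subgroup G) : Prop :=
  L ≤ H ∧ K < L ∧ ∀ h ∈ H, ∀ g ∈ L, h⁻¹ * g * h ∈ L

/-- `L` is minimal among the normal subgroups of `H` properly containing `K`. -/
def MinimalOver (H K L : Subgroup G) : Prop :=
  NormalOver H K L ∧ ∀ L' : Subgroup G, NormalOver H K L' → L' ≤ L → L' = L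

/-- `ε(H,K) = K̂` if `H = K`, and otherwise `∏_L (K̂ - L̂)`, the product running over
the normal subgroups `L` of `H` minimal with respect to properly containing `K`
(all such factors commute pairwise, so the product is order-independent). -/
noncomputable def eps (H K : Subgroup G) : MonoidAlgebra ℚ G :=
  if H = K then hat K
  else (({L : Subgroup G | MinimalOver H K L}.toFinset).toList.map
    fun L => hat K - hat L).prod

/-- The subgroup `[H,g] = ⟨g⁻¹h⁻¹gh : h ∈ H⟩`. -/
def commSub (H : Subgroup G) (g : G) : Subgroup G :=
  Subgroup.closure {c : G | ∃ h ∈ H, c = g⁻¹ * h⁻¹ * g * h}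

/-- The quotient `H/K` is cyclic (elementwise formulation: some `h ∈ H` is such that
every `g ∈ H` lies in a coset `h^m K`). -/
def CyclicQuot (H K : Subgroup G) : Prop :=
  ∃ h ∈ H, ∀ g ∈ H, ∃ m : ℤ, (h ^ m)⁻¹ * g ∈ K

/-- `K` is normal in `H` (elementwise formulation). -/
def NormalIn (H K : Subgroup G) : Prop :=
  ∀ h ∈ H, ∀ g ∈ K, h⁻¹ * g * h ∈ K

/-- `(H,K)` is a Shoda pair of `G`. -/
def IsShodaPair (H K : Subgroup G) : Prop :=
  K ≤ H ∧ NormalIn H K ∧ CyclicQuot H K ∧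
    ∀ g : G, commSub H g ⊓ H ≤ K → g ∈ H

/-- `(H,K)` is a strong Shoda pair of `G`: conditions (SS1), (SS2), (SS3).
Maximal abelianness of `H/K` in `N_G(K)/K` is phrased via the Galois correspondence
between subgroups of `N_G(K)/K` and subgroups of `G` lying between `K` and `N_G(K)`. -/
def IsStrongShodaPair (H K : Subgroup G) : Prop :=
  -- (SS1): `H` is a normal subgroup of `N_G(K)`
  (H ≤ Subgroup.normalizer (K : Set G) ∧ ∀ g ∈ Subgroup.normalizer (K : Set G), ∀ h ∈ H, g⁻¹ * h * g ∈ H) ∧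
  -- (SS2): `H/K` is cyclic and a maximal abelian subgroup of `N_G(K)/K`
  (CyclicQuot H K ∧
    (∀ h₁ ∈ H, ∀ h₂ ∈ H, h₁⁻¹ * h₂⁻¹ * h₁ * h₂ ∈ K) ∧
    ∀ C : Subgroup G, K ≤ C → C ≤ Subgroup.normalizer (K : Set G) →
      (∀ c₁ ∈ C, ∀ c₂ ∈ C, c₁⁻¹ * c₂⁻¹ * c₁ * c₂ ∈ K) → H ≤ C → C = H) ∧
  -- (SS3): `ε(H,K)·(g⁻¹ ε(H,K) g) = 0` for `g ∉ N_G(K)`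
  (∀ g : G, g ∉ Subgroup.normalizer (K : Set G) →
    eps H K * (MonoidAlgebra.of ℚ G g⁻¹ * eps H K * MonoidAlgebra.of ℚ G g) = 0)


/-- The data of the group `G = P ⋊ D_{2^n}` of order `p^{2r+1}·2^n`: an odd prime
`p ≡ 1 (mod 4)`, `r ≥ 1`, `n ≥ 3` with `2^{n-1}` the exact power of `2` dividing
`p - 1`, an integer `k` of multiplicative order `2^{n-1}` modulo `p` with inverse `q`
modulo `p`, and generators `x, y₁, …, y_r, z₁, …, z_r, a, b` of `G` subject to the
listed relations (commutator convention `[u,v] = u⁻¹v⁻¹uv`). -/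
structure GData (G : Type*) [Group G] [Fintype G] where
  p : ℕ
  r : ℕ
  n : ℕ
  k : ℕ
  q : ℕ
  x : G
  y : Fin r → G
  z : Fin r → G
  a : G
  b : G
  hp : p.Prime
  hp4 : p % 4 = 1
  hr : 1 ≤ r
  hn : 3 ≤ n
  hdvd : 2 ^ (n - 1) ∣ p - 1
  hndvd : ¬ 2 ^ n ∣ p - 1
  hordk : orderOf ((k : ZMod p)) = 2 ^ (n - 1)
  hkq : ((k : ZMod p)) * (q : ZMod p) = 1
  hcard : Fintype.card G = p ^ (2 * r + 1) * 2 ^ n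
  hgen : Subgroup.closure (({x, a, b} : Set G) ∪ Set.range y ∪ Set.range z) = ⊤
  hxp : x ^ p = 1
  hyp : ∀ i, y i ^ p = 1
  hzp : ∀ i, z i ^ p = 1
  han : a ^ 2 ^ (n - 1) = 1
  hb2 : b ^ 2 = 1
  hxy : ∀ i, x⁻¹ * (y i)⁻¹ * x * y i = 1
  hxz : ∀ i, x⁻¹ * (z i)⁻¹ * x * z i = 1
  hyy : ∀ i j, (y i)⁻¹ * (y j)⁻¹ * y i * y j = 1
  hzz : ∀ i j, (z i)⁻¹ * (z j)⁻¹ * z i * z j = 1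
  hyz : ∀ i, (y i)⁻¹ * (z i)⁻¹ * y i * z i = x
  hyz' : ∀ i j, i ≠ j → (y i)⁻¹ * (z j)⁻¹ * y i * z j = 1
  hax : a⁻¹ * x⁻¹ * a * x = 1
  hay : ∀ i, a⁻¹ * (y i)⁻¹ * a * y i = (y i) ^ (1 - (k : ℤ))
  haz : ∀ i, a⁻¹ * (z i)⁻¹ * a * z i = (z i) ^ (1 - (q : ℤ))
  hbx : b⁻¹ * x⁻¹ * b * x = x ^ 2
  hby : ∀ i, b⁻¹ * (y i)⁻¹ * b * y i = z i * y i
  hbz : ∀ i, b⁻¹ * (z i)⁻¹ * b * z i = y i * z i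
  hba : b⁻¹ * a⁻¹ * b * a = a ^ 2

variable {G : Type*} [Group G] [Fintype G]

/-- The subgroup `P = ⟨x, y₁, …, y_r, z₁, …, z_r⟩` of `G`. -/
def GData.P (d : GData G) : Subgroup G :=
  Subgroup.closure (({d.x} : Set G) ∪ Set.range d.y ∪ Set.range d.z)

end Paper

/-
Take `g = b a^j`. Its commutators with `x`, `y_i`, `z_i` are `x²`, `z_i^{q^j} y_i` and
`y_i^{k^j} z_i`; the last lies in `K` by hypothesis and the middle one follows from it because
`y_i^{k^j q^j} = y_i` and `K` is normal in `P`. Hence `[P, g] ≤ K`, and the Shoda condition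
forces `g ∈ P`. As `x` is central in `P` but inverted by `g`, we get `x = 1`, so `P` is abelian
of exponent `p`; since also `g² = 1`, `g = 1`. Then `b = a^{-j}` commutes with `a`, so `a² = 1`,
and `y_i = y_i^{k²}`, `z_i = z_i^{q²}` with `k², q² ≢ 1 (mod p)` kill `y_i` and `z_i`. Thus `G`
is generated by `a` of order at most `2`, contradicting `p ∣ |G|`.
-/

section GroupLemmas

variable {G : Type*} [Group G]

theorem inv_mul_mul_eq_mul_inv_of_commutator_eq {u v w : G} (h : u⁻¹ * v⁻¹ * u * v = w) :
    u⁻¹ * v * u = v * w⁻¹ := by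
  rw [← h]; group

theorem commute_of_commutator_eq_one {u v : G} (h : u⁻¹ * v⁻¹ * u * v = 1) : Commute u v :=
  calc u * v = v * u * (u⁻¹ * v⁻¹ * u * v) := by group
    _ = v * u := by rw [h, mul_one]

theorem conj_pow_eq_pow_pow {a y : G} {k : ℕ} (h : a⁻¹ * y * a = y ^ k) (m : ℕ) :
    (a ^ m)⁻¹ * y * a ^ m = y ^ k ^ m := by
  induction m with
  | zero => simp
  | succ m ih =>
    calc (a ^ (m + 1))⁻¹ * y * a ^ (m + 1) = (a ^ m)⁻¹ * (a⁻¹ * y * a) * a ^ m := by group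
      _ = (a ^ m)⁻¹ * y ^ k * a ^ m := by rw [h]
      _ = ((a ^ m)⁻¹ * y * a ^ m) ^ k := by
        simpa using (conj_pow (a := (a ^ m)⁻¹) (b := y)).symm
      _ = y ^ k ^ (m + 1) := by rw [ih, ← pow_mul, pow_succ]

theorem pow_eq_one_of_mem_closure_of_commute {S : Set G} {m : ℕ}
    (hcomm : ∀ u ∈ S, ∀ v ∈ S, u * v = v * u) (hS : ∀ s ∈ S, s ^ m = 1) {g : G}
    (hg : g ∈ Subgroup.closure S) : g ^ m = 1 := by
  have := Subgroup.isMulCommutative_closure hcomm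
  induction hg using Subgroup.closure_induction with
  | mem s hs => exact hS s hs
  | one => exact one_pow m
  | mul u v hu hv ihu ihv => rw [Commute.mul_pow (setLike_mul_comm hu hv), ihu, ihv, one_mul]
  | inv u hu ihu => rw [inv_pow, ihu, inv_one]

theorem eq_one_of_pow_eq_self {p m : ℕ} (hp : p.Prime) {u : G} (hu : u ^ p = 1)
    (hum : u ^ m = u) (hm : (m : ZMod p) ≠ 1) : u = 1 := by
  rcases hp.eq_one_or_self_of_dvd _ (orderOf_dvd_of_pow_eq_one hu) with h | h
  · exact orderOf_eq_one_iff.mp h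
  · nth_rewrite 2 [← pow_one u] at hum
    rw [pow_eq_pow_iff_modEq, h] at hum
    exact absurd ((ZMod.natCast_eq_natCast_iff _ _ _).mpr hum) (by simpa using hm)

end GroupLemmas

namespace Paper

variable {G : Type*} [Group G]

theorem NormalIn.pow_mul_mem {H K : Subgroup G} (hK : NormalIn H K) {u v : G} (hu : u ∈ H)
    (hv : v ∈ H) {s t : ℕ} (h : u ^ s * v ∈ K) (hst : u ^ (s * t) = u) : v ^ t * u ∈ K := by
  have key : ∀ m : ℕ, u ^ (s * m) * v ^ m ∈ K := by
    intro m
    induction m with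
    | zero => simp
    | succ m ih =>
      have e : u ^ (s * (m + 1)) * v ^ (m + 1)
          = (u ^ s * v) * (v⁻¹ * (u ^ (s * m) * v ^ m) * v) := by group
      exact e ▸ mul_mem h (hK v hv _ ih)
  have := hK u hu _ (key t)
  rwa [hst, ← mul_assoc, inv_mul_cancel, one_mul] at this

theorem NormalIn.commSub_closure_le {S : Set G} {K : Subgroup G}
    (hK : NormalIn (Subgroup.closure S) K) {g : G} (hS : ∀ s ∈ S, g⁻¹ * s⁻¹ * g * s ∈ K) :
    commSub (Subgroup.closure S) g ≤ K := by
  rw [commSub, Subgroup.closure_le]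
  rintro c ⟨h, hh, rfl⟩
  induction hh using Subgroup.closure_induction with
  | mem s hs => exact hS s hs
  | one => simp
  | mul h₁ h₂ hh₁ hh₂ ih₁ ih₂ =>
    have e : g⁻¹ * (h₁ * h₂)⁻¹ * g * (h₁ * h₂)
        = (g⁻¹ * h₂⁻¹ * g * h₂) * (h₂⁻¹ * (g⁻¹ * h₁⁻¹ * g * h₁) * h₂) := by group
    exact e ▸ mul_mem ih₂ (hK h₂ hh₂ _ ih₁)
  | inv h hh ih =>
    have e : g⁻¹ * h⁻¹⁻¹ * g * h⁻¹ = h⁻¹⁻¹ * (g⁻¹ * h⁻¹ * g * h)⁻¹ * h⁻¹ := by group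
    exact e ▸ hK h⁻¹ (inv_mem hh) _ (inv_mem ih)

namespace GData

variable [Fintype G] (d : GData G)

theorem odd_p : Odd d.p :=
  Nat.odd_iff.mpr (by have := d.hp4; omega)

theorem five_le_p : 5 ≤ d.p := by
  have := d.hp.two_le; have := d.hp4; omega

theorem eq_one_of_sq_eq_one {u : G} (h2 : u ^ 2 = 1) (hp : u ^ d.p = 1) : u = 1 :=
  (pow_eq_one_iff_of_coprime (Nat.coprime_two_left.mpr d.odd_p)).mp ⟨h2, hp⟩

theorem a_conj_x : d.a⁻¹ * d.x * d.a = d.x := by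
  rw [inv_mul_mul_eq_mul_inv_of_commutator_eq d.hax, inv_one, mul_one]

theorem a_pow_conj_x (j : ℕ) : (d.a ^ j)⁻¹ * d.x * d.a ^ j = d.x := by
  rw [conj_pow_eq_pow_pow (k := 1) (by rw [pow_one, d.a_conj_x]) j, one_pow, pow_one]

theorem a_conj_y (i : Fin d.r) : d.a⁻¹ * d.y i * d.a = d.y i ^ d.k := by
  rw [inv_mul_mul_eq_mul_inv_of_commutator_eq (d.hay i)]; group

theorem a_conj_z (i : Fin d.r) : d.a⁻¹ * d.z i * d.a = d.z i ^ d.q := by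
  rw [inv_mul_mul_eq_mul_inv_of_commutator_eq (d.haz i)]; group

theorem b_conj_x : d.b⁻¹ * d.x * d.b = d.x⁻¹ := by
  rw [inv_mul_mul_eq_mul_inv_of_commutator_eq d.hbx]; group

theorem b_conj_a : d.b⁻¹ * d.a * d.b = d.a⁻¹ := by
  rw [inv_mul_mul_eq_mul_inv_of_commutator_eq d.hba]; group

theorem commute_x_of_mem_P {h : G} (hh : h ∈ d.P) : Commute d.x h := by
  induction hh using Subgroup.closure_induction with
  | mem u hu =>
    rcases hu with (rfl | ⟨i, rfl⟩) | ⟨i, rfl⟩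
    · exact Commute.refl _
    · exact commute_of_commutator_eq_one (d.hxy i)
    · exact commute_of_commutator_eq_one (d.hxz i)
  | one => exact Commute.one_right _
  | mul u v _ _ hu hv => exact hu.mul_right hv
  | inv u _ hu => exact hu.inv_right

theorem k_pow_mul_q_pow_modEq_one (j : ℕ) : d.k ^ j * d.q ^ j ≡ 1 [MOD d.p] := by
  rw [← ZMod.natCast_eq_natCast_iff]
  push_cast
  rw [← mul_pow, d.hkq, one_pow]

theorem y_pow_k_pow_mul_q_pow (i : Fin d.r) (j : ℕ) : d.y i ^ (d.k ^ j * d.q ^ j) = d.y i := by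
  nth_rewrite 2 [← pow_one (d.y i)]
  exact pow_eq_pow_iff_modEq.mpr
    (Nat.ModEq.of_dvd (orderOf_dvd_of_pow_eq_one (d.hyp i)) (d.k_pow_mul_q_pow_modEq_one j))

theorem k_sq_ne_one : (d.k : ZMod d.p) ^ 2 ≠ 1 := by
  intro h
  have h4 : 4 ≤ 2 ^ (d.n - 1) :=
    calc 4 = 2 ^ 2 := by norm_num
      _ ≤ 2 ^ (d.n - 1) := Nat.pow_le_pow_right (by norm_num) (by have := d.hn; omega)
  have := Nat.le_of_dvd (by norm_num) (d.hordk ▸ orderOf_dvd_of_pow_eq_one h)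
  omega

theorem q_sq_ne_one : (d.q : ZMod d.p) ^ 2 ≠ 1 := by
  intro h
  apply d.k_sq_ne_one
  have := congrArg (· ^ 2) d.hkq
  rwa [mul_pow, h, mul_one, one_pow] at this

theorem commutator_b_mul_a_pow (j : ℕ) (s : G) :
    (d.b * d.a ^ j)⁻¹ * s⁻¹ * (d.b * d.a ^ j) * s
      = (d.a ^ j)⁻¹ * ((d.b⁻¹ * s⁻¹ * d.b * s) * s⁻¹) * d.a ^ j * s := by
  group

theorem commSub_b_mul_a_pow_le {K : Subgroup G} (hK : NormalIn d.P K) {j : ℕ}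
    (hQK : Subgroup.closure (({d.x} : Set G) ∪ Set.range fun i => d.y i ^ d.k ^ j * d.z i) ≤ K) :
    commSub d.P (d.b * d.a ^ j) ≤ K := by
  have hxK : d.x ∈ K := hQK (Subgroup.subset_closure (Or.inl rfl))
  have hyzK (i : Fin d.r) : d.y i ^ d.k ^ j * d.z i ∈ K :=
    hQK (Subgroup.subset_closure (Or.inr ⟨i, rfl⟩))
  have hyP (i : Fin d.r) : d.y i ∈ d.P := Subgroup.subset_closure (Or.inl (Or.inr ⟨i, rfl⟩))
  have hzP (i : Fin d.r) : d.z i ∈ d.P := Subgroup.subset_closure (Or.inr ⟨i, rfl⟩)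
  refine NormalIn.commSub_closure_le hK ?_
  rintro s ((rfl | ⟨i, rfl⟩) | ⟨i, rfl⟩) <;> rw [commutator_b_mul_a_pow]
  · rw [d.hbx, show d.x ^ 2 * d.x⁻¹ = d.x by group, d.a_pow_conj_x]
    exact mul_mem hxK hxK
  · rw [d.hby i, mul_inv_cancel_right, conj_pow_eq_pow_pow (d.a_conj_z i)]
    exact hK.pow_mul_mem (hyP i) (hzP i) (hyzK i) (d.y_pow_k_pow_mul_q_pow i j)
  · rw [d.hbz i, mul_inv_cancel_right, conj_pow_eq_pow_pow (d.a_conj_y i)]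
    exact hyzK i

theorem x_eq_one_of_b_mul_a_pow_mem {j : ℕ} (hg : d.b * d.a ^ j ∈ d.P) : d.x = 1 := by
  have hinv : (d.b * d.a ^ j)⁻¹ * d.x * (d.b * d.a ^ j) = d.x⁻¹ :=
    calc _ = (d.a ^ j)⁻¹ * (d.b⁻¹ * d.x * d.b) * d.a ^ j := by group
      _ = ((d.a ^ j)⁻¹ * d.x * d.a ^ j)⁻¹ := by rw [d.b_conj_x]; group
      _ = d.x⁻¹ := by rw [d.a_pow_conj_x]
  rw [mul_assoc, (d.commute_x_of_mem_P hg).eq, ← mul_assoc, inv_mul_cancel, one_mul] at hinv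
  refine d.eq_one_of_sq_eq_one ?_ d.hxp
  rw [sq]; nth_rewrite 1 [hinv]; exact inv_mul_cancel _

theorem pow_p_eq_one_of_mem_P (hx : d.x = 1) {g : G} (hg : g ∈ d.P) : g ^ d.p = 1 := by
  have hyz (i j : Fin d.r) : Commute (d.y i) (d.z j) := by
    by_cases hij : i = j
    · exact commute_of_commutator_eq_one (hij ▸ hx ▸ d.hyz i)
    · exact commute_of_commutator_eq_one (d.hyz' i j hij)
  refine pow_eq_one_of_mem_closure_of_commute ?_ ?_ hg
  · rintro u ((rfl | ⟨i, rfl⟩) | ⟨i, rfl⟩) v ((rfl | ⟨j, rfl⟩) | ⟨j, rfl⟩) <;>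
      first
      | rfl
      | rw [hx, one_mul, mul_one]
      | exact (commute_of_commutator_eq_one (d.hyy i j)).eq
      | exact (commute_of_commutator_eq_one (d.hzz i j)).eq
      | exact (hyz i j).eq
      | exact (hyz j i).symm.eq
  · rintro s ((rfl | ⟨i, rfl⟩) | ⟨i, rfl⟩)
    exacts [d.hxp, d.hyp i, d.hzp i]

theorem b_mul_a_pow_sq (j : ℕ) : (d.b * d.a ^ j) ^ 2 = 1 := by
  have hconj : d.b⁻¹ * d.a ^ j * d.b = (d.a ^ j)⁻¹ := by
    rw [← inv_pow, ← d.b_conj_a]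
    simpa using (conj_pow (a := d.b⁻¹) (b := d.a) (i := j)).symm
  calc (d.b * d.a ^ j) ^ 2 = d.b ^ 2 * (d.b⁻¹ * d.a ^ j * d.b) * d.a ^ j := by
        rw [sq, sq]; group
    _ = 1 := by rw [hconj, d.hb2]; group

theorem a_sq_eq_one_of_b_eq {j : ℕ} (hb : d.b = (d.a ^ j)⁻¹) : d.a ^ 2 = 1 := by
  have h : d.b⁻¹ * d.a * d.b = d.a := by rw [hb]; group
  rw [d.b_conj_a] at h
  rw [sq]; nth_rewrite 1 [← h]; exact inv_mul_cancel _

theorem y_eq_one_of_a_sq (ha : d.a ^ 2 = 1) (i : Fin d.r) : d.y i = 1 := by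
  have h := conj_pow_eq_pow_pow (d.a_conj_y i) 2
  rw [ha, inv_one, one_mul, mul_one] at h
  exact eq_one_of_pow_eq_self d.hp (d.hyp i) h.symm (by push_cast; exact d.k_sq_ne_one)

theorem z_eq_one_of_a_sq (ha : d.a ^ 2 = 1) (i : Fin d.r) : d.z i = 1 := by
  have h := conj_pow_eq_pow_pow (d.a_conj_z i) 2
  rw [ha, inv_one, one_mul, mul_one] at h
  exact eq_one_of_pow_eq_self d.hp (d.hzp i) h.symm (by push_cast; exact d.q_sq_ne_one)

theorem zpowers_a_eq_top (hx : d.x = 1) (hy : ∀ i, d.y i = 1) (hz : ∀ i, d.z i = 1)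
    (hb : d.b ∈ Subgroup.zpowers d.a) : Subgroup.zpowers d.a = ⊤ := by
  refine top_le_iff.mp (d.hgen ▸ (Subgroup.closure_le _).mpr ?_)
  rintro u (((rfl | rfl | rfl) | ⟨i, rfl⟩) | ⟨i, rfl⟩)
  · exact hx ▸ one_mem _
  · exact Subgroup.mem_zpowers _
  · exact hb
  · exact hy i ▸ one_mem _
  · exact hz i ▸ one_mem _

theorem zpowers_a_ne_top (ha : d.a ^ 2 = 1) : Subgroup.zpowers d.a ≠ ⊤ := by
  intro h
  have hcard : Nat.card G = orderOf d.a := by rw [← Nat.card_zpowers, h, Subgroup.card_top]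
  have hpG : d.p ∣ Nat.card G := by
    rw [Nat.card_eq_fintype_card, d.hcard]
    exact dvd_mul_of_dvd_left (dvd_pow_self d.p (by omega)) _
  have := Nat.le_of_dvd two_pos ((hcard ▸ hpG).trans (orderOf_dvd_of_pow_eq_one ha))
  have := d.five_le_p
  omega

end GData

end Paper

theorem stmt12_general {G : Type*} [Group G] [Fintype G] (d : Paper.GData G)
    (K : Subgroup G) (hKnormal : Paper.NormalIn d.P K)
    (hj : ∃ j, 1 ≤ j ∧ j ≤ 2 ^ (d.n - 1) ∧
      Subgroup.closure (({d.x} : Set G) ∪ Set.range fun i => d.y i ^ d.k ^ j * d.z i) ≤ K) :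
    ¬ Paper.IsShodaPair d.P K := by
  rintro ⟨-, -, -, hShoda⟩
  obtain ⟨j, -, -, hQK⟩ := hj
  have hgP := hShoda _ (inf_le_left.trans (d.commSub_b_mul_a_pow_le hKnormal hQK))
  have hx : d.x = 1 := d.x_eq_one_of_b_mul_a_pow_mem hgP
  have hg : d.b * d.a ^ j = 1 :=
    d.eq_one_of_sq_eq_one (d.b_mul_a_pow_sq j) (d.pow_p_eq_one_of_mem_P hx hgP)
  have hb : d.b = (d.a ^ j)⁻¹ := eq_inv_of_mul_eq_one_left hg
  have ha : d.a ^ 2 = 1 := d.a_sq_eq_one_of_b_eq hb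
  refine d.zpowers_a_ne_top ha
    (d.zpowers_a_eq_top hx (d.y_eq_one_of_a_sq ha) (d.z_eq_one_of_a_sq ha) ?_)
  exact hb ▸ inv_mem (pow_mem (Subgroup.mem_zpowers _) j)

/-- Let `K ⊴ P` with `P/K` cyclic.  If for some `1 ≤ j ≤ 2^{n-1}`
the subgroup `⟨x, y₁^{k^j}z₁, …, y_r^{k^j}z_r⟩` is contained in `K`, then `(P,K)` is
not a Shoda pair of `G`. -/
theorem stmt12 {G : Type*} [Group G] [Fintype G] (d : Paper.GData G)
    (K : Subgroup G) (hKP : K ≤ d.P) (hKnormal : Paper.NormalIn d.P K)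
    (hcyc : Paper.CyclicQuot d.P K)
    (hj : ∃ j, 1 ≤ j ∧ j ≤ 2 ^ (d.n - 1) ∧
      Subgroup.closure (({d.x} : Set G) ∪ Set.range fun i => d.y i ^ d.k ^ j * d.z i) ≤ K) :
    ¬ Paper.IsShodaPair d.P K :=
  stmt12_general d K hKnormal hj
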